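/- Let 0 < λ < 1 < γ with λγ < 1, θ₀ = -ln λ / ln γ, and fix a constant C ≠ 0. Then there exist sequences of positive integers k_j ≥ m_j with k_j, m_j → ∞, and a sequence s_j → ∞ of positive reals, such that for every j there is an interval I_j of values of θ containing θ₀ in its closure, with diam I_j → 0 as j → ∞, so that as θ ranges over I_j the quantity γ^{k_j - θ m_j} takes every value in the interval [s_j^{-1}, s_j]. -/
import Mathlib

private lemma aux_sqrt_atTop : Filter.Tendsto Real.sqrt Filter.atTop Filter.atTop := by
  apply Filter.tendsto_atTop_atTop.2
  intro b
  refine ⟨max (b ^ 2) 0, fun a ha => ?_⟩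
  have h1 : Real.sqrt (b ^ 2) ≤ Real.sqrt a := Real.sqrt_le_sqrt (le_trans (le_max_left _ _) ha)
  rw [Real.sqrt_sq_eq_abs] at h1
  exact le_trans (le_abs_self b) h1

theorem theta_unfolding_covers_large_intervals
    (lam gam : ℝ) (h0 : 0 < lam) (h1 : lam < 1) (h2 : 1 < gam)
    (hdis : lam * gam < 1) (C : ℝ) (hC : C ≠ 0) :
    ∃ (k m : ℕ → ℕ) (s a b : ℕ → ℝ),
      (∀ j, 0 < k j) ∧ (∀ j, 0 < m j) ∧ (∀ j, m j ≤ k j) ∧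
      Filter.Tendsto k Filter.atTop Filter.atTop ∧
      Filter.Tendsto m Filter.atTop Filter.atTop ∧
      (∀ j, 0 < s j) ∧ Filter.Tendsto s Filter.atTop Filter.atTop ∧
      (∀ j, -Real.log lam / Real.log gam ∈ Set.Icc (a j) (b j)) ∧
      Filter.Tendsto (fun j => b j - a j) Filter.atTop (nhds 0) ∧
      (∀ j, Set.Icc (s j)⁻¹ (s j) ⊆
        (fun θ : ℝ => gam ^ ((k j : ℝ) - θ * (m j : ℝ))) '' Set.Icc (a j) (b j)) := by
  have hgam0 : (0:ℝ) < gam := lt_trans one_pos h2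
  set lg := Real.log gam with hlg
  have hlgpos : 0 < lg := Real.log_pos h2
  set θ0 : ℝ := -Real.log lam / lg with hθ0
  have hθ1 : 1 < θ0 := by
    have hmul : Real.log (lam * gam) < 0 := Real.log_neg (mul_pos h0 hgam0) hdis
    rw [Real.log_mul (ne_of_gt h0) (ne_of_gt hgam0)] at hmul
    rw [hθ0, lt_div_iff₀ hlgpos]
    linarith
  have hθpos : 0 < θ0 := lt_trans one_pos hθ1
  have hsqrtcomp : Filter.Tendsto (fun j : ℕ => Real.sqrt ((j:ℝ) + 1))
      Filter.atTop Filter.atTop := by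
    apply aux_sqrt_atTop.comp
    apply Filter.tendsto_atTop_add_const_right
    exact tendsto_natCast_atTop_atTop
  refine ⟨fun j => ⌈θ0 * ((j:ℝ) + 1)⌉₊, fun j => j + 1,
    fun j => gam ^ (Real.sqrt ((j:ℝ) + 1) - 1),
    fun j => θ0 - 1 / Real.sqrt ((j:ℝ) + 1), fun j => θ0 + 1 / Real.sqrt ((j:ℝ) + 1),
    ?_, ?_, ?_, ?_, ?_, ?_, ?_, ?_, ?_, ?_⟩
  · intro j
    exact Nat.ceil_pos.2 (mul_pos hθpos (by positivity))
  · intro j; exact Nat.succ_pos j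
  · intro j
    have h : ((j:ℝ) + 1) ≤ θ0 * ((j:ℝ) + 1) := by nlinarith [hθ1]
    calc j + 1 = ⌈((j:ℝ) + 1)⌉₊ := by
          rw [show ((j:ℝ) + 1) = ((j + 1 : ℕ) : ℝ) by push_cast; ring, Nat.ceil_natCast]
      _ ≤ ⌈θ0 * ((j:ℝ) + 1)⌉₊ := Nat.ceil_le_ceil h
  · apply Filter.tendsto_atTop_mono (fun j => ?_) Filter.tendsto_id
    have h : ((j:ℝ) + 1) ≤ θ0 * ((j:ℝ) + 1) := by nlinarith [hθ1]
    calc (id j : ℕ) ≤ j + 1 := Nat.le_succ j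
      _ = ⌈((j:ℝ) + 1)⌉₊ := by
          rw [show ((j:ℝ) + 1) = ((j + 1 : ℕ) : ℝ) by push_cast; ring, Nat.ceil_natCast]
      _ ≤ ⌈θ0 * ((j:ℝ) + 1)⌉₊ := Nat.ceil_le_ceil h
  · exact Filter.tendsto_add_atTop_nat 1
  · intro j; exact Real.rpow_pos_of_pos hgam0 _
  · have hpow : Filter.Tendsto (fun x : ℝ => gam ^ x) Filter.atTop Filter.atTop := by
      simp_rw [Real.rpow_def_of_pos hgam0]
      exact Real.tendsto_exp_atTop.comp (Filter.Tendsto.const_mul_atTop hlgpos Filter.tendsto_id)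
    have hexp : Filter.Tendsto (fun j : ℕ => Real.sqrt ((j:ℝ) + 1) - 1)
        Filter.atTop Filter.atTop := by
      simpa [sub_eq_add_neg] using
        Filter.tendsto_atTop_add_const_right Filter.atTop (-1 : ℝ) hsqrtcomp
    exact hpow.comp hexp
  · intro j
    have h : (0:ℝ) < 1 / Real.sqrt ((j:ℝ) + 1) := by positivity
    exact ⟨by linarith, by linarith⟩
  · have heq : (fun j : ℕ => (θ0 + 1 / Real.sqrt ((j:ℝ) + 1)) - (θ0 - 1 / Real.sqrt ((j:ℝ) + 1)))
        = fun j : ℕ => 2 * (Real.sqrt ((j:ℝ) + 1))⁻¹ := by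
      funext j; rw [one_div]; ring
    rw [heq, show (0:ℝ) = 2 * 0 by ring]
    exact Filter.Tendsto.const_mul 2 hsqrtcomp.inv_tendsto_atTop
  · intro j
    have hn0 : (0:ℝ) < (j:ℝ) + 1 := by positivity
    have hsq : 0 < Real.sqrt ((j:ℝ) + 1) := Real.sqrt_pos.2 hn0
    have hδn : (1 / Real.sqrt ((j:ℝ) + 1)) * ((j:ℝ) + 1) = Real.sqrt ((j:ℝ) + 1) := by
      rw [div_mul_eq_mul_div, one_mul, Real.div_sqrt]
    have hKge : θ0 * ((j:ℝ) + 1) ≤ (⌈θ0 * ((j:ℝ) + 1)⌉₊ : ℝ) := Nat.le_ceil _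
    have hKlt : (⌈θ0 * ((j:ℝ) + 1)⌉₊ : ℝ) < θ0 * ((j:ℝ) + 1) + 1 :=
      Nat.ceil_lt_add_one (le_of_lt (mul_pos hθpos hn0))
    have hcont : ContinuousOn
        (fun θ : ℝ => gam ^ ((⌈θ0 * ((j:ℝ) + 1)⌉₊ : ℝ) - θ * ((j:ℝ) + 1)))
        (Set.Icc (θ0 - 1 / Real.sqrt ((j:ℝ) + 1)) (θ0 + 1 / Real.sqrt ((j:ℝ) + 1))) := by
      apply Continuous.continuousOn
      exact Continuous.rpow continuous_const (by continuity)
        (fun x => Or.inl (ne_of_gt hgam0))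
    have hab : θ0 - 1 / Real.sqrt ((j:ℝ) + 1) ≤ θ0 + 1 / Real.sqrt ((j:ℝ) + 1) := by
      have : (0:ℝ) < 1 / Real.sqrt ((j:ℝ) + 1) := by positivity
      linarith
    have hsub := intermediate_value_Icc' hab hcont
    have hs : gam ^ (Real.sqrt ((j:ℝ) + 1) - 1)
        ≤ gam ^ ((⌈θ0 * ((j:ℝ) + 1)⌉₊ : ℝ) - (θ0 - 1 / Real.sqrt ((j:ℝ) + 1)) * ((j:ℝ) + 1)) := by
      apply Real.rpow_le_rpow_of_exponent_le (le_of_lt h2)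
      nlinarith
    have hs' : gam ^ ((⌈θ0 * ((j:ℝ) + 1)⌉₊ : ℝ) - (θ0 + 1 / Real.sqrt ((j:ℝ) + 1)) * ((j:ℝ) + 1))
        ≤ (gam ^ (Real.sqrt ((j:ℝ) + 1) - 1))⁻¹ := by
      rw [← Real.rpow_neg (le_of_lt hgam0)]
      apply Real.rpow_le_rpow_of_exponent_le (le_of_lt h2)
      nlinarith
    intro x hx
    simp only at hx ⊢
    rw [show ((j + 1 : ℕ) : ℝ) = ((j:ℝ) + 1) by push_cast; ring]
    exact hsub ⟨le_trans hs' hx.1, le_trans hx.2 hs⟩
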